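/- arXiv:2009.08803 — 2 statements merged into one kernel-verified Lean document; each statement's English description precedes it below -/
import Mathlib

section
/- For any real α > −1 and any β ∈ ℂ, the Wright function series W_{α,β}(z) = ∑_{k=0}^∞ z^k / (k! · Γ(αk + β)) converges for every z ∈ ℂ, i.e., the series defines an entire function of z (here 1/Γ is interpreted as the reciprocal Gamma function, which vanishes at nonpositive integers). -/
open Complex Real Filter MeasureTheory Set Topology

/-- |Γ(w)| ≤ Γ(Re w) for Re w > 0. -/
lemma wright_aux_abs_Gamma_le {w : ℂ} (hw : 0 < w.re) :
    ‖Complex.Gamma w‖ ≤ Real.Gamma w.re := by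
  rw [Complex.Gamma_eq_integral hw, Real.Gamma_eq_integral hw, Complex.GammaIntegral]
  refine (MeasureTheory.norm_integral_le_integral_norm _).trans (le_of_eq ?_)
  refine MeasureTheory.setIntegral_congr_fun measurableSet_Ioi fun x hx => ?_
  rw [norm_mul, Complex.norm_real,
    Complex.norm_cpow_eq_rpow_re_of_pos hx]
  simp [Real.norm_eq_abs, _root_.abs_of_nonneg (Real.exp_pos (-x)).le, Complex.sub_re]

/-- Γ(t+θ) ≤ Γ(t)·t^θ for t > 0, 0 < θ < 1 (log-convexity). -/
lemma wright_aux_Gamma_add_le {t θ : ℝ} (ht : 0 < t) (hθ0 : 0 < θ) (hθ1 : θ < 1) :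
    Real.Gamma (t + θ) ≤ Real.Gamma t * t ^ θ := by
  have h := Real.Gamma_mul_add_mul_le_rpow_Gamma_mul_rpow_Gamma (s := t) (t := t + 1)
    ht (by linarith) (by linarith : (0:ℝ) < 1 - θ) hθ0 (by ring)
  have e1 : (1 - θ) * t + θ * (t + 1) = t + θ := by ring
  rw [e1, Real.Gamma_add_one ht.ne'] at h
  calc Real.Gamma (t + θ) ≤ Real.Gamma t ^ (1 - θ) * (t * Real.Gamma t) ^ θ := h
    _ = Real.Gamma t * t ^ θ := by
        rw [Real.mul_rpow ht.le (Real.Gamma_pos_of_pos ht).le, ← mul_assoc,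
          mul_comm (Real.Gamma t ^ (1 - θ)), mul_assoc, ← Real.rpow_add
          (Real.Gamma_pos_of_pos ht), sub_add_cancel, Real.rpow_one, mul_comm]

/-- ‖sin w‖ ≤ exp |Im w|. -/
lemma wright_aux_sin_le (w : ℂ) : ‖Complex.sin w‖ ≤ Real.exp |w.im| := by
  rw [Complex.sin_eq]
  calc ‖Complex.sin ↑w.re * Complex.cosh ↑w.im + Complex.cos ↑w.re * Complex.sinh ↑w.im * I‖
      ≤ ‖Complex.sin ↑w.re * Complex.cosh ↑w.im‖ + ‖Complex.cos ↑w.re * Complex.sinh ↑w.im * I‖ :=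
        norm_add_le _ _
    _ = ‖Complex.sin ↑w.re‖ * ‖Complex.cosh ↑w.im‖ + ‖Complex.cos ↑w.re‖ * ‖Complex.sinh ↑w.im‖ := by
        simp [norm_mul]
    _ ≤ 1 * ‖Complex.cosh ↑w.im‖ + 1 * ‖Complex.sinh ↑w.im‖ := by
        gcongr
        · rw [← Complex.ofReal_sin, Complex.norm_real, Real.norm_eq_abs]
          exact Real.abs_sin_le_one _
        · rw [← Complex.ofReal_cos, Complex.norm_real, Real.norm_eq_abs]
          exact Real.abs_cos_le_one _
    _ ≤ Real.exp |w.im| := by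
        rw [← Complex.ofReal_cosh, ← Complex.ofReal_sinh, Complex.norm_real,
          Complex.norm_real, Real.norm_eq_abs, Real.norm_eq_abs, one_mul, one_mul,
          _root_.abs_of_pos (Real.cosh_pos w.im), Real.abs_sinh, ← Real.cosh_abs,
          ← Real.cosh_add_sinh |w.im|]

/-- descent: ‖1/Γ‖ on a horizontal line with Re ≥ 1 is bounded by its sup on Re ∈ [1,2]. -/
lemma wright_aux_descent {c M : ℝ}
    (hM : ∀ x ∈ Set.Icc (1:ℝ) 2, ‖(Complex.Gamma (x + c * I))⁻¹‖ ≤ M) :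
    ∀ (n : ℕ) (s : ℂ), s.im = c → 1 ≤ s.re → s.re ≤ 2 + n → ‖(Complex.Gamma s)⁻¹‖ ≤ M := by
  intro n
  induction n with
  | zero =>
    intro s him h1 h2
    have hs : (↑s.re + ↑c * I) = s := by rw [← him]; exact s.re_add_im
    simpa [hs] using hM s.re ⟨h1, by simpa using h2⟩
  | succ n ih =>
    intro s him h1 h2
    by_cases h : s.re ≤ 2 + n
    · exact ih s him h1 h
    push_neg at h
    have hre : (s - 1).re = s.re - 1 := by simp
    have h1' : 1 ≤ (s - 1).re := by
      rw [hre]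
      have hn : (0:ℝ) ≤ (n:ℝ) := Nat.cast_nonneg n
      linarith
    have hs1 : s - 1 ≠ 0 := fun hc => by simp [hc] at h1'; linarith
    have hG : Complex.Gamma s = (s - 1) * Complex.Gamma (s - 1) := by
      have := Complex.Gamma_add_one (s - 1) hs1
      simpa using this
    have hnorm : 1 ≤ ‖s - 1‖ := by
      calc (1:ℝ) ≤ (s - 1).re := h1'
        _ ≤ |(s - 1).re| := le_abs_self _
        _ ≤ ‖s - 1‖ := Complex.abs_re_le_norm _
    have hb := ih (s - 1) (by simp [him]) h1' (by rw [hre]; push_cast at h2 ⊢; linarith)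
    rw [hG, mul_inv, norm_mul, norm_inv]
    calc ‖s - 1‖⁻¹ * ‖(Complex.Gamma (s - 1))⁻¹‖ ≤ 1 * ‖(Complex.Gamma (s - 1))⁻¹‖ := by
          have : ‖s - 1‖⁻¹ ≤ 1 := by rw [inv_le_one_iff₀]; right; exact hnorm
          exact mul_le_mul_of_nonneg_right this (norm_nonneg _)
      _ ≤ M := by rw [one_mul]; exact hb

/-- reflection bound for Re s ≤ 0. -/
lemma wright_aux_reflect {s : ℂ} (hs : s.re ≤ 0) :
    ‖(Complex.Gamma s)⁻¹‖ ≤ Real.exp (π * |s.im|) / π * Real.Gamma (1 - s.re) := by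
  have h1s : 0 < (1 - s).re := by simp; linarith
  have hΓpos : 0 < Real.Gamma (1 - s.re) := Real.Gamma_pos_of_pos (by linarith)
  by_cases hG : Complex.Gamma s = 0
  · rw [hG, inv_zero, norm_zero]
    positivity
  have hG1 : Complex.Gamma (1 - s) ≠ 0 := Complex.Gamma_ne_zero_of_re_pos h1s
  have hrefl := Complex.Gamma_mul_Gamma_one_sub s
  have hsin : Complex.sin (↑π * s) ≠ 0 := by
    intro hc
    rw [hc, div_zero] at hrefl
    exact mul_ne_zero hG hG1 hrefl
  have key : (Complex.Gamma s)⁻¹ = Complex.sin (↑π * s) * Complex.Gamma (1 - s) / ↑π := by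
    rw [eq_div_iff hsin] at hrefl
    refine (eq_inv_of_mul_eq_one_right ?_).symm
    rw [mul_div_assoc', div_eq_iff (by exact_mod_cast Real.pi_ne_zero : (↑π:ℂ) ≠ 0), one_mul]
    linear_combination hrefl
  rw [key, norm_div, norm_mul]
  have hπ : ‖(↑π : ℂ)‖ = π := by
    rw [Complex.norm_real, Real.norm_eq_abs, _root_.abs_of_pos Real.pi_pos]
  rw [hπ, div_mul_eq_mul_div]
  have b1 : ‖Complex.sin (↑π * s)‖ ≤ Real.exp (π * |s.im|) := by
    have := wright_aux_sin_le (↑π * s)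
    have him : (↑π * s).im = π * s.im := by simp
    rwa [him, abs_mul, _root_.abs_of_pos Real.pi_pos] at this
  have b2 : ‖Complex.Gamma (1 - s)‖ ≤ Real.Gamma (1 - s.re) := by
    have := wright_aux_abs_Gamma_le h1s
    rwa [show (1 - s).re = 1 - s.re by simp] at this
  have hfin := mul_le_mul b1 b2 (norm_nonneg _) (Real.exp_pos _).le
  gcongr

theorem wright_series_summable (α : ℝ) (hα : -1 < α) (β : ℂ) (z : ℂ) :
    Summable (fun k : ℕ =>
      z ^ k / ((Nat.factorial k : ℂ) * Complex.Gamma ((α : ℂ) * k + β))) := by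
  by_cases hz : z = 0
  · apply summable_of_ne_finset_zero (s := {0})
    intro k hk
    simp only [Finset.mem_singleton] at hk
    simp [hz, zero_pow hk]
  have hnorm : ∀ k : ℕ, ‖z ^ k / ((Nat.factorial k : ℂ) * Complex.Gamma ((α:ℂ) * k + β))‖
      = ‖z‖ ^ k / (Nat.factorial k : ℝ) * ‖(Complex.Gamma ((α:ℂ) * k + β))⁻¹‖ := by
    intro k
    rw [norm_div, norm_mul, norm_pow, Complex.norm_natCast, norm_inv, ← div_div,
      div_eq_mul_inv (‖z‖ ^ k / (Nat.factorial k : ℝ))]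
  have hre : ∀ k : ℕ, ((α:ℂ) * k + β).re = α * k + β.re := by
    intro k; simp
  have him : ∀ k : ℕ, ((α:ℂ) * k + β).im = β.im := by
    intro k
    simp [Complex.add_im, Complex.mul_im]
  -- the bound on the half-plane Re ≥ 1
  have hcont : Continuous fun x : ℝ => ‖(Complex.Gamma (↑x + ↑β.im * I))⁻¹‖ :=
    (Complex.differentiable_one_div_Gamma.continuous.comp (by continuity)).norm
  obtain ⟨x₀, hx₀, hmax⟩ := (isCompact_Icc (a := (1:ℝ)) (b := 2)).exists_isMaxOn
    ⟨1, by norm_num⟩ hcont.continuousOn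
  set M := ‖(Complex.Gamma (↑x₀ + ↑β.im * I))⁻¹‖ with hMdef
  have hub : ∀ s : ℂ, s.im = β.im → 1 ≤ s.re → ‖(Complex.Gamma s)⁻¹‖ ≤ M := by
    intro s hsim hs1
    refine wright_aux_descent (fun x hx => hmax hx) ⌈s.re⌉₊ s hsim hs1 ?_
    have := Nat.le_ceil s.re
    have h2 : (0:ℝ) ≤ (⌈s.re⌉₊ : ℝ) := Nat.cast_nonneg _
    linarith
  rcases lt_trichotomy α 0 with hneg | h0 | hpos
  · -- α < 0
    set a : ℝ := -α with hadef
    have ha0 : 0 < a := by simp [hadef]; linarith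
    have ha1 : a < 1 := by simp [hadef]; linarith
    obtain ⟨N, hN⟩ := exists_nat_ge (β.re / a)
    have hN' : β.re ≤ a * N := by
      rw [div_le_iff₀ ha0] at hN; linarith
    rw [← summable_nat_add_iff N]
    set K := Real.exp (π * |β.im|) / π with hKdef
    have hK0 : 0 < K := by positivity
    set gm : ℕ → ℝ := fun k =>
      ‖z‖ ^ (k + N) / ((k + N).factorial : ℝ) * (K * Real.Gamma (1 - β.re + a * (k + N)))
      with hgdef
    have harg : ∀ k : ℕ, (1:ℝ) ≤ 1 - β.re + a * (k + N) := by
      intro k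
      have h1 : a * N ≤ a * (k + N) := by
        apply mul_le_mul_of_nonneg_left _ ha0.le
        push_cast; linarith [Nat.cast_nonneg (α := ℝ) k]
      push_cast at h1 ⊢
      linarith
    have hargpos : ∀ k : ℕ, (0:ℝ) < 1 - β.re + a * (k + N) := fun k => lt_of_lt_of_le one_pos (harg k)
    have hgpos : ∀ k : ℕ, 0 < gm k := by
      intro k
      refine mul_pos (div_pos (pow_pos (norm_pos_iff.mpr hz) _) ?_)
        (mul_pos hK0 (Real.Gamma_pos_of_pos (hargpos k)))
      exact_mod_cast Nat.factorial_pos _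
    refine Summable.of_norm_bounded (g := gm) ?_ ?_
    · -- summability of g by ratio test
      apply summable_of_ratio_test_tendsto_lt_one (l := 0) one_pos
        (Eventually.of_forall fun n => (hgpos n).ne')
      have hratio_eq : ∀ n : ℕ, ‖gm (n + 1)‖ / ‖gm n‖ = gm (n + 1) / gm n := by
        intro n
        rw [Real.norm_eq_abs, Real.norm_eq_abs, _root_.abs_of_pos (hgpos (n+1)),
          _root_.abs_of_pos (hgpos n)]
      simp only [hratio_eq]
      apply squeeze_zero' (f := fun n : ℕ => gm (n + 1) / gm n)
        (g := fun n : ℕ => ‖z‖ * (1 - β.re + a * ((n : ℝ) + N)) ^ a / ((n : ℝ) + N + 1))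
        (Eventually.of_forall fun n => (div_pos (hgpos _) (hgpos _)).le)
      · -- ratio bound
        refine Eventually.of_forall fun n => ?_
        rw [div_le_iff₀ (hgpos n)]
        have hfact : (((n + 1 + N).factorial : ℝ)) = ((n:ℝ) + N + 1) * ((n + N).factorial : ℝ) := by
          have h : n + 1 + N = (n + N) + 1 := by ring
          rw [h, Nat.factorial_succ]
          push_cast; ring
        have hpow : ‖z‖ ^ (n + 1 + N) = ‖z‖ ^ (n + N) * ‖z‖ := by
          rw [show n + 1 + N = (n + N) + 1 from by ring, pow_succ]
        have hGa : Real.Gamma (1 - β.re + a * (↑(n + 1) + ↑N)) ≤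
            Real.Gamma (1 - β.re + a * ((n:ℝ) + ↑N)) * (1 - β.re + a * ((n:ℝ) + ↑N)) ^ a := by
          have e : 1 - β.re + a * ((↑(n + 1) : ℝ) + ↑N) = (1 - β.re + a * ((n:ℝ) + ↑N)) + a := by
            push_cast; ring
          rw [e]
          exact wright_aux_Gamma_add_le (hargpos n) ha0 ha1
        have hf0 : (0:ℝ) < ((n + N).factorial : ℝ) := by exact_mod_cast Nat.factorial_pos _
        have hne1 : ((n:ℝ) + ↑N + 1) ≠ 0 := by positivity
        simp only [hgdef]
        calc ‖z‖ ^ (n + 1 + N) / ((n + 1 + N).factorial : ℝ) *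
              (K * Real.Gamma (1 - β.re + a * (↑(n + 1) + ↑N)))
            ≤ ‖z‖ ^ (n + 1 + N) / ((n + 1 + N).factorial : ℝ) *
              (K * (Real.Gamma (1 - β.re + a * ((n:ℝ) + ↑N)) *
                (1 - β.re + a * ((n:ℝ) + ↑N)) ^ a)) := by
              have h1 : (0:ℝ) ≤ ‖z‖ ^ (n + 1 + N) / ((n + 1 + N).factorial : ℝ) := by positivity
              exact mul_le_mul_of_nonneg_left (mul_le_mul_of_nonneg_left hGa hK0.le) h1
          _ = ‖z‖ * (1 - β.re + a * ((n:ℝ) + ↑N)) ^ a / ((n:ℝ) + ↑N + 1) *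
              (‖z‖ ^ (n + N) / ((n + N).factorial : ℝ) *
                (K * Real.Gamma (1 - β.re + a * ((n:ℝ) + ↑N)))) := by
              rw [hfact, hpow]
              field_simp
      · -- tendsto 0
        obtain ⟨n₀, hn₀⟩ := exists_nat_ge ((1 - β.re + a * N) / (1 - a))
        have hlim : Tendsto (fun n : ℕ => ‖z‖ * (n : ℝ) ^ (a - 1)) atTop (𝓝 0) := by
          have h1 : Tendsto (fun n : ℕ => ((n : ℝ) ^ (a - 1))) atTop (𝓝 0) := by
            have h2 := (tendsto_rpow_neg_atTop (by linarith : (0:ℝ) < 1 - a)).comp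
              (tendsto_natCast_atTop_atTop (R := ℝ))
            simpa [Function.comp_def, neg_sub] using h2
          simpa using h1.const_mul ‖z‖
        refine squeeze_zero' (Eventually.of_forall fun n => div_nonneg (mul_nonneg
          (norm_nonneg _) (Real.rpow_nonneg (hargpos n).le _)) (by positivity)) ?_ hlim
        filter_upwards [eventually_ge_atTop (n₀ + 1)] with n hn
        have hn1 : (1:ℝ) ≤ (n:ℝ) := by exact_mod_cast Nat.one_le_iff_ne_zero.mpr (by omega)
        have hnpos : (0:ℝ) < (n:ℝ) := by linarith
        have hxn : 1 - β.re + a * ((n:ℝ) + N) ≤ (n:ℝ) := by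
          have h1 : (1 - β.re + a * N) / (1 - a) ≤ (n:ℝ) := by
            refine hn₀.trans ?_
            exact_mod_cast Nat.cast_le.mpr (by omega)
          rw [div_le_iff₀ (by linarith : (0:ℝ) < 1 - a)] at h1
          nlinarith
        have hrpow : (1 - β.re + a * ((n:ℝ) + ↑N)) ^ a ≤ (n:ℝ) ^ a :=
          Real.rpow_le_rpow (hargpos n).le hxn ha0.le
        calc ‖z‖ * (1 - β.re + a * ((n:ℝ) + ↑N)) ^ a / ((n:ℝ) + ↑N + 1)
            ≤ ‖z‖ * (n:ℝ) ^ a / (n:ℝ) := by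
              gcongr
              linarith [Nat.cast_nonneg (α := ℝ) N]
          _ = ‖z‖ * (n:ℝ) ^ (a - 1) := by
              rw [Real.rpow_sub hnpos, Real.rpow_one, mul_div_assoc]
    · -- pointwise bound
      intro k
      rw [hnorm (k + N)]
      refine mul_le_mul_of_nonneg_left ?_ (by positivity)
      have hsre : ((α:ℂ) * ↑(k + N) + β).re ≤ 0 := by
        rw [hre (k + N)]
        have : β.re ≤ a * (k + N) := by
          have h1 : a * N ≤ a * (k + N) := by
            apply mul_le_mul_of_nonneg_left _ ha0.le
            push_cast; linarith [Nat.cast_nonneg (α := ℝ) k]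
          push_cast at h1 ⊢
          linarith
        push_cast at this ⊢
        simp only [hadef] at this
        linarith
      have := wright_aux_reflect hsre
      rw [him (k + N), hre (k + N)] at this
      refine this.trans (le_of_eq ?_)
      rw [hKdef]
      congr 1
      push_cast
      simp only [hadef]
      ring
  · -- α = 0
    subst h0
    refine Summable.of_norm_bounded
      (g := fun k => ‖z‖ ^ k / (Nat.factorial k : ℝ) * ‖(Complex.Gamma β)⁻¹‖)
      ((Real.summable_pow_div_factorial ‖z‖).mul_right _) fun k => ?_
    rw [hnorm k]
    simp
  · -- α > 0
    obtain ⟨N, hN⟩ := exists_nat_ge ((1 - β.re) / α)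
    refine Summable.of_norm_bounded_eventually_nat
      (g := fun k => ‖z‖ ^ k / (Nat.factorial k : ℝ) * M)
      ((Real.summable_pow_div_factorial ‖z‖).mul_right _) ?_
    filter_upwards [eventually_ge_atTop N] with k hk
    rw [hnorm k]
    refine mul_le_mul_of_nonneg_left ?_ (by positivity)
    refine hub _ (him k) ?_
    rw [hre k]
    rw [div_le_iff₀ hpos] at hN
    have : (N:ℝ) ≤ (k:ℝ) := by exact_mod_cast hk
    nlinarith
end

section
/- The Mainardi M-function of order 1/2 is M_{1/2}(t) = e^{−t²/4}/√π for all real t, i.e., ∑_{k=0}^∞ (−t)^k / (k! Γ((1−k)/2)) = e^{−t²/4}/√π, where 1/Γ is the reciprocal Gamma function (so terms with (1−k)/2 a nonpositive integer vanish). -/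
lemma gamma_half_sub_nat (n : ℕ) :
    Real.Gamma (1 / 2 - n) =
      (-4 : ℝ) ^ n * n.factorial * Real.sqrt Real.pi / (2 * n).factorial := by
  induction n with
  | zero => norm_num [Real.Gamma_one_half_eq]
  | succ n ih =>
    have hn0 : (0 : ℝ) ≤ n := Nat.cast_nonneg n
    have hx : (1 / 2 - ((n : ℝ) + 1)) ≠ 0 := by intro h; linarith
    have h1 : (1 / 2 - ((n : ℝ) + 1)) + 1 = 1 / 2 - n := by ring
    have hstep : Real.Gamma (1 / 2 - ((n : ℝ) + 1)) * (1 / 2 - ((n : ℝ) + 1)) =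
        (-4 : ℝ) ^ n * n.factorial * Real.sqrt Real.pi / (2 * n).factorial := by
      rw [← ih, ← h1, Real.Gamma_add_one hx]; ring
    have hΓ : Real.Gamma (1 / 2 - ((n : ℝ) + 1)) =
        ((-4 : ℝ) ^ n * n.factorial * Real.sqrt Real.pi / (2 * n).factorial) /
          (1 / 2 - ((n : ℝ) + 1)) := (eq_div_iff hx).mpr hstep
    have hfac : ((2 * (n + 1)).factorial : ℝ) =
        (2 * (n : ℝ) + 2) * (2 * (n : ℝ) + 1) * (2 * n).factorial := by
      have h2 : 2 * (n + 1) = (2 * n + 1) + 1 := by ring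
      rw [h2, Nat.factorial_succ, Nat.factorial_succ]; push_cast; ring
    have h2 : ((2 * n).factorial : ℝ) ≠ 0 := by positivity
    have h3 : (2 * (n : ℝ) + 2) ≠ 0 := by positivity
    have h4 : (2 * (n : ℝ) + 1) ≠ 0 := by positivity
    push_cast
    rw [hΓ, hfac, Nat.factorial_succ]
    push_cast
    have h5 : (2 * (n : ℝ) + 2) * (2 * (n : ℝ) + 1) * ((2 * n).factorial : ℝ) ≠ 0 := by
      positivity
    rw [pow_succ, div_div, div_eq_div_iff (mul_ne_zero h2 hx) h5]
    ring

set_option maxHeartbeats 1000000 in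
theorem mainardi_M_half (t : ℝ) :
    ∑' k : ℕ, (-t) ^ k / ((Nat.factorial k : ℝ) * Real.Gamma ((1 - k) / 2)) =
      Real.exp (-t ^ 2 / 4) / Real.sqrt Real.pi := by
  set f : ℕ → ℝ := fun k => (-t) ^ k / ((Nat.factorial k : ℝ) * Real.Gamma ((1 - k) / 2))
    with hf
  have hodd : ∀ k : ℕ, f (2 * k + 1) = 0 := by
    intro k
    have h : ((1 : ℝ) - ((2 * k + 1 : ℕ) : ℝ)) / 2 = -(k : ℝ) := by push_cast; ring
    simp only [hf, h, Real.Gamma_neg_nat_eq_zero, mul_zero, div_zero]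
  have key : ∀ n : ℕ, f (2 * n) = ((-t ^ 2 / 4) ^ n / n.factorial) / Real.sqrt Real.pi := by
    intro n
    have h1 : ((1 : ℝ) - ((2 * n : ℕ) : ℝ)) / 2 = 1 / 2 - n := by push_cast; ring
    have h3 : ((-t) : ℝ) ^ (2 * n) = (t ^ 2) ^ n := by rw [pow_mul, neg_sq]
    have h4 : ((-t ^ 2 / 4 : ℝ)) ^ n = (t ^ 2) ^ n / (-4 : ℝ) ^ n := by
      rw [← div_pow]; congr 1; ring
    have h2 : ((2 * n).factorial : ℝ) ≠ 0 := by positivity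
    have h5 : ((-4 : ℝ)) ^ n ≠ 0 := pow_ne_zero _ (by norm_num)
    have h6 : (n.factorial : ℝ) ≠ 0 := by positivity
    have hπ : Real.sqrt Real.pi ≠ 0 := by positivity
    simp only [hf, h1, gamma_half_sub_nat, h3, h4]
    field_simp
  have heven : HasSum (fun n : ℕ => f (2 * n)) (Real.exp (-t ^ 2 / 4) / Real.sqrt Real.pi) := by
    have h := NormedSpace.expSeries_div_hasSum_exp (𝔸 := ℝ) (-t ^ 2 / 4)
    rw [← Real.exp_eq_exp_ℝ] at h
    simpa only [key] using h.div_const (Real.sqrt Real.pi)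
  have hodd' : HasSum (fun n : ℕ => f (2 * n + 1)) 0 := by
    simp only [hodd]; exact hasSum_zero
  have h := (tsum_even_add_odd heven.summable hodd'.summable).symm
  rw [hodd'.tsum_eq, heven.tsum_eq, add_zero] at h
  rw [← h]
end
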